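/- Let f : [-1/2, 1/2] → ℝ be a smooth nonnegative function with 0 ≤ f ≤ 1 and f(x) = 1 for all x ∈ [-1/2 + δ, 1/2 - δ], where 0 < δ ≤ 1/4, and consider f extended to the strip Ω = 𝕋 × [-1/2,1/2] as a function of the second variable only. Let g(x₂) = ∫_{-1/2}^{x₂} f - (x₂ + 1/2)·∫_{-1/2}^{1/2} f (so that g'' = f' and g(±1/2) = 0). Then the average over Ω of |∇g|² = |g'|² is at most 6δ. -/

import Mathlib

/-- The average over the strip Ω = 𝕋×[-1/2,1/2] of |∇g|² = |g'|², where
g solves Δg = ∂₂ f with homogeneous Dirichlet conditions at x₂ = ±1/2,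
so that g'(x₂) = f(x₂) - ∫_{-1/2}^{1/2} f, is at most 6δ. -/
theorem stmt_0 (f : ℝ → ℝ) (δ : ℝ) (hδ : 0 < δ) (hδ' : δ ≤ 1/4)
    (hf : ContDiff ℝ (⊤ : ℕ∞) f)
    (hf0 : ∀ x ∈ Set.Icc (-(1:ℝ)/2) (1/2), 0 ≤ f x)
    (hf1 : ∀ x ∈ Set.Icc (-(1:ℝ)/2) (1/2), f x ≤ 1)
    (hfe : ∀ x ∈ Set.Icc (-(1:ℝ)/2 + δ) (1/2 - δ), f x = 1)
    (g' : ℝ → ℝ)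
    (hg' : ∀ x, g' x = f x - ∫ y in (-(1:ℝ)/2)..(1/2), f y) :
    ∫ x in (-(1:ℝ)/2)..(1/2), (g' x)^2 ≤ 6 * δ := by
  set m : ℝ := ∫ y in (-(1:ℝ)/2)..(1/2), f y with hm
  have hab : (-(1:ℝ)/2) ≤ 1/2 := by norm_num
  have hfc : Continuous f := hf.continuous
  have hint_f : IntervalIntegrable f MeasureTheory.volume (-(1:ℝ)/2) (1/2) :=
    hfc.intervalIntegrable _ _
  have hint_f2 : IntervalIntegrable (fun x => (f x)^2) MeasureTheory.volume (-(1:ℝ)/2) (1/2) :=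
    (hfc.pow 2).intervalIntegrable _ _
  have hint_g : IntervalIntegrable (fun x => (g' x)^2) MeasureTheory.volume (-(1:ℝ)/2) (1/2) := by
    have : Continuous fun x => (g' x)^2 := by
      have : (fun x => (g' x)^2) = fun x => (f x - m)^2 := by
        funext x; rw [hg' x]
      rw [this]; continuity
    exact this.intervalIntegrable _ _
  -- m ≤ 1
  have hm1 : m ≤ 1 := by
    calc m ≤ ∫ _x in (-(1:ℝ)/2)..(1/2), (1:ℝ) :=
          intervalIntegral.integral_mono_on hab hint_f
            ((continuous_const (y := (1:ℝ))).intervalIntegrable _ _)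
            (fun x hx => hf1 x (by simpa using hx))
      _ = 1 := by simp; norm_num
  -- m ≥ 1 - 2δ
  have hm2 : 1 - 2*δ ≤ m := by
    have hsub : ∫ y in (-(1:ℝ)/2 + δ)..(1/2 - δ), f y = 1 - 2*δ := by
      have h1 : (-(1:ℝ)/2 + δ) ≤ 1/2 - δ := by linarith
      rw [intervalIntegral.integral_congr (g := fun _ => (1:ℝ))
        (fun x hx => hfe x (by rwa [Set.uIcc_of_le h1] at hx))]
      simp; ring
    rw [← hsub]
    apply intervalIntegral.integral_mono_interval (by linarith) (by linarith)
      (by linarith) ?_ hint_f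
    · filter_upwards [MeasureTheory.ae_restrict_mem measurableSet_Ioc] with x hx
      exact hf0 x ⟨le_of_lt hx.1, hx.2⟩
  -- ∫ f² ≤ m
  have hf2m : ∫ x in (-(1:ℝ)/2)..(1/2), (f x)^2 ≤ m := by
    apply intervalIntegral.integral_mono_on hab hint_f2 hint_f
    intro x hx
    have h0 := hf0 x hx
    have h1 := hf1 x hx
    nlinarith
  -- expand
  have hexp : ∫ x in (-(1:ℝ)/2)..(1/2), (g' x)^2
      = (∫ x in (-(1:ℝ)/2)..(1/2), (f x)^2) - m^2 := by
    have h1 : (fun x => (g' x)^2) = fun x => (f x)^2 - 2*m*(f x) + m^2 := by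
      funext x; rw [hg' x]; ring
    rw [h1, intervalIntegral.integral_add (hint_f2.sub ((hint_f.const_mul (2*m))))
        (intervalIntegrable_const),
      intervalIntegral.integral_sub hint_f2 (hint_f.const_mul (2*m)),
      intervalIntegral.integral_const_mul]
    simp [← hm]
    have hm' : m = ∫ y in (-(1:ℝ)/2)..2⁻¹, f y := by rw [hm, one_div]
    linear_combination 2 * m * hm'
  rw [hexp]
  nlinarith
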